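/- Let T : [r₀, ∞) → [1, ∞) be nondecreasing, and suppose T(r) ≲ log T(r) + log r holds for all r outside a set of finite Lebesgue measure (i.e., there is c > 0 with T(r) ≤ c(log T(r) + log r) on the complement). Then T(r) = O(log r). -/

import Mathlib

/-!
A set of finite measure cannot contain a whole interval `(r, r + L]` of length `L > volume E`,
so every `r` is followed, within distance `L`, by a good point `s ∉ E`. At `s` the inequality
`T ≤ c (log T + log s)` self-improves, since `c log T ≤ T / 2 + c (log (2c) - 1)`, to
`T s ≤ 2c log s + O(1)`. Monotonicity gives `T r ≤ T s`, and
`log s ≤ log r + log (1 + L / r₀)`.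
-/

open MeasureTheory Set

theorem exists_mem_Ioc_notMem_of_volume_lt {E : Set ℝ} {L : ℝ}
    (hE : volume E < ENNReal.ofReal L) (a : ℝ) : ∃ s ∈ Ioc a (a + L), s ∉ E := by
  refine not_subset.mp fun hsub => (measure_mono (μ := volume) hsub).not_gt ?_
  rwa [Real.volume_Ioc, add_sub_cancel_left]

theorem Real.le_two_mul_add_of_le_mul_log_add {x c y : ℝ} (hx : 0 < x) (hc : 0 < c)
    (h : x ≤ c * (Real.log x + y)) : x ≤ 2 * c * y + 2 * c * (Real.log (2 * c) - 1) := by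
  have h2c : 0 < 2 * c := by positivity
  have hlog : Real.log x ≤ x / (2 * c) + (Real.log (2 * c) - 1) := by
    have := Real.log_le_sub_one_of_pos (div_pos hx h2c)
    rw [Real.log_div hx.ne' h2c.ne'] at this
    linarith
  have hcx : c * (x / (2 * c)) = x / 2 := by field_simp
  nlinarith

theorem Real.log_add_le_log_add_log_one_add_div {r₀ r L : ℝ} (hr₀ : 0 < r₀)
    (hr : r₀ ≤ r) (hL : 0 ≤ L) :
    Real.log (r + L) ≤ Real.log r + Real.log (1 + L / r₀) := by
  have hr0 : 0 < r := hr₀.trans_le hr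
  rw [← Real.log_mul hr0.ne' (by positivity)]
  refine Real.log_le_log (by positivity) ?_
  have : L ≤ r * (L / r₀) := by
    rw [mul_div_assoc', le_div_iff₀ hr₀]
    nlinarith
  linarith

theorem growth_log_self_general (r₀ : ℝ) (hr₀ : 1 < r₀) (T : ℝ → ℝ)
    (hge : ∀ r ∈ Ici r₀, 1 ≤ T r)
    (hmono : MonotoneOn T (Ici r₀))
    (c : ℝ) (hc : 0 < c)
    (E : Set ℝ) (hEfin : volume E < ⊤)
    (hineq : ∀ r ∈ Ioi r₀ \ E, T r ≤ c * (Real.log (T r) + Real.log r)) :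
    ∃ A B : ℝ, ∀ r ∈ Ici r₀, T r ≤ A * Real.log r + B := by
  obtain ⟨L, hL⟩ := ENNReal.exists_nat_gt hEfin.ne
  refine ⟨2 * c, 2 * c * Real.log (1 + L / r₀) + 2 * c * (Real.log (2 * c) - 1),
    fun r hr => ?_⟩
  obtain ⟨s, ⟨hrs, hsL⟩, hsE⟩ :=
    exists_mem_Ioc_notMem_of_volume_lt (by rwa [ENNReal.ofReal_natCast]) r
  have hr₀s : r₀ < s := lt_of_le_of_lt hr hrs
  have hs : s ∈ Ici r₀ := hr₀s.le
  have hlog_s : Real.log s ≤ Real.log r + Real.log (1 + L / r₀) :=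
    (Real.log_le_log (by linarith) hsL).trans
      (Real.log_add_le_log_add_log_one_add_div (by linarith) hr L.cast_nonneg)
  calc T r ≤ T s := hmono hr hs hrs.le
    _ ≤ 2 * c * Real.log s + 2 * c * (Real.log (2 * c) - 1) :=
      Real.le_two_mul_add_of_le_mul_log_add (by linarith [hge s hs]) hc
        (hineq s ⟨hr₀s, hsE⟩)
    _ ≤ 2 * c * (Real.log r + Real.log (1 + L / r₀)) + 2 * c * (Real.log (2 * c) - 1) := by
      gcongr
    _ = 2 * c * Real.log r +
          (2 * c * Real.log (1 + L / r₀) + 2 * c * (Real.log (2 * c) - 1)) := by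
      ring

/-- If a nondecreasing function `T ≥ 1` on `[r₀,∞)` (`r₀ > 1`) satisfies
`T(r) ≤ c(log T(r) + log r)` outside a set of finite Lebesgue measure,
then `T(r) = O(log r)`. -/
theorem growth_log_self (r₀ : ℝ) (hr₀ : 1 < r₀) (T : ℝ → ℝ)
    (hge : ∀ r ∈ Ici r₀, 1 ≤ T r)
    (hmono : MonotoneOn T (Ici r₀))
    (c : ℝ) (hc : 0 < c)
    (E : Set ℝ) (hE : E ⊆ Ioi r₀) (hEfin : volume E < ⊤)
    (hineq : ∀ r ∈ Ioi r₀ \ E, T r ≤ c * (Real.log (T r) + Real.log r)) :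
    ∃ A B : ℝ, ∀ r ∈ Ici r₀, T r ≤ A * Real.log r + B :=
  growth_log_self_general r₀ hr₀ T hge hmono c hc E hEfin hineq
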